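/- The set P⁺ K_ℂ N_ℂ = {[[a,b],[c,d]] ∈ SL(2,ℂ) : c + d ≠ 0} is dense in SL(2,ℂ). -/

import Mathlib

open Matrix

noncomputable def pplus (x : ℂ) : Matrix (Fin 2) (Fin 2) ℂ := !![1, x; 0, 1]

noncomputable def kmat (γ : ℂ) : Matrix (Fin 2) (Fin 2) ℂ := !![γ, 0; 0, γ⁻¹]

noncomputable def nmat (s : ℂ) : Matrix (Fin 2) (Fin 2) ℂ :=
  !![1 + Complex.I * s, -(Complex.I * s); Complex.I * s, 1 - Complex.I * s]

/-- `SL(2,ℂ)` carries the subspace topology of the space of `2×2` complex matrices. -/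
noncomputable instance : TopologicalSpace (Matrix.SpecialLinearGroup (Fin 2) ℂ) :=
  TopologicalSpace.induced (fun g => (g : Matrix (Fin 2) (Fin 2) ℂ)) inferInstance

/-!
The bottom row of `pplus x * kmat γ * nmat s` is `γ⁻¹ • (I s, 1 - I s)`, so `c + d = γ⁻¹ ≠ 0`.
Conversely, for `c + d ≠ 0` the bottom row forces `γ = (c + d)⁻¹` and `I s = c / (c + d)`, and
the top row then determines `x`. For density, `c + d = 0` together with `det = 1` forces `d ≠ 0`,
and right multiplication by `!![1, 0; t, 1]` adds `t d` to `c + d` while tending to the identity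
as `t → 0`.
-/

open Filter Topology
open scoped MatrixGroups

lemma pplus_mul_kmat_mul_nmat_one_zero_add_one_one (x γ s : ℂ) :
    (pplus x * kmat γ * nmat s) 1 0 + (pplus x * kmat γ * nmat s) 1 1 = γ⁻¹ := by
  simp [pplus, kmat, nmat]
  ring

lemma eq_pplus_mul_kmat_mul_nmat {a b c d : ℂ} (hdet : a * d - b * c = 1) (hcd : c + d ≠ 0) :
    !![a, b; c, d] =
      pplus ((a + b) / (c + d) - 1 / (c + d) ^ 2) * kmat (c + d)⁻¹ *
        nmat (-Complex.I * c / (c + d)) := by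
  have hIs : Complex.I * (-Complex.I * c / (c + d)) = c / (c + d) := by
    rw [← mul_div_assoc, ← mul_assoc, mul_neg, Complex.I_mul_I, neg_neg, one_mul]
  simp only [pplus, kmat, nmat, mul_fin_two, hIs, inv_inv]
  ext i j
  fin_cases i <;> fin_cases j <;> simp <;> field_simp
  · linear_combination (c + d) * hdet
  · linear_combination -(c + d) * hdet
  · ring

def lowerUnitriangular (t : ℂ) : SL(2, ℂ) :=
  ⟨!![1, 0; t, 1], by simp [det_fin_two_of]⟩

@[simp]
lemma coe_lowerUnitriangular (t : ℂ) :
    (lowerUnitriangular t : Matrix (Fin 2) (Fin 2) ℂ) = !![1, 0; t, 1] :=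
  rfl

lemma lowerUnitriangular_zero : lowerUnitriangular 0 = 1 := by
  ext : 1
  simp [one_fin_two]

lemma continuous_mul_lowerUnitriangular (g : SL(2, ℂ)) :
    Continuous fun t => g * lowerUnitriangular t :=
  continuous_induced_rng.2 <| by
    simp only [Function.comp_def, Matrix.SpecialLinearGroup.coe_mul, coe_lowerUnitriangular]
    fun_prop

lemma mul_lowerUnitriangular_one_zero_add_one_one (g : SL(2, ℂ)) (t : ℂ) :
    (↑(g * lowerUnitriangular t) : Matrix (Fin 2) (Fin 2) ℂ) 1 0
        + (↑(g * lowerUnitriangular t) : Matrix (Fin 2) (Fin 2) ℂ) 1 1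
      = (g : Matrix (Fin 2) (Fin 2) ℂ) 1 0 + (g : Matrix (Fin 2) (Fin 2) ℂ) 1 1
        + t * (g : Matrix (Fin 2) (Fin 2) ℂ) 1 1 := by
  simp [Matrix.SpecialLinearGroup.coe_mul, mul_apply, Fin.sum_univ_two]
  ring

lemma one_one_ne_zero_of_one_zero_add_one_one_eq_zero (g : SL(2, ℂ))
    (hg : (g : Matrix (Fin 2) (Fin 2) ℂ) 1 0 + (g : Matrix (Fin 2) (Fin 2) ℂ) 1 1 = 0) :
    (g : Matrix (Fin 2) (Fin 2) ℂ) 1 1 ≠ 0 := by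
  intro hd
  have hdet := g.det_coe
  rw [det_fin_two, hd, eq_neg_of_add_eq_zero_left hg, hd] at hdet
  simp at hdet

theorem dense_setOf_one_zero_add_one_one_ne_zero :
    Dense {g : SL(2, ℂ) |
      (g : Matrix (Fin 2) (Fin 2) ℂ) 1 0 + (g : Matrix (Fin 2) (Fin 2) ℂ) 1 1 ≠ 0} := by
  intro g
  by_cases hg : (g : Matrix (Fin 2) (Fin 2) ℂ) 1 0 + (g : Matrix (Fin 2) (Fin 2) ℂ) 1 1 = 0
  · have hd := one_one_ne_zero_of_one_zero_add_one_one_eq_zero g hg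
    have hlim : Tendsto (fun t => g * lowerUnitriangular t) (𝓝[≠] 0) (𝓝 g) := by
      simpa [lowerUnitriangular_zero] using
        ((continuous_mul_lowerUnitriangular g).tendsto 0).mono_left nhdsWithin_le_nhds
    refine mem_closure_of_tendsto hlim ?_
    filter_upwards [self_mem_nhdsWithin] with t ht
    rw [mul_lowerUnitriangular_one_zero_add_one_one, hg, zero_add]
    exact mul_ne_zero ht hd
  · exact subset_closure hg

/-- `P⁺ K_ℂ N_ℂ = {g ∈ SL(2,ℂ) : c + d ≠ 0}` is dense in `SL(2,ℂ)`. -/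
theorem pkn_dense :
    ({g : Matrix.SpecialLinearGroup (Fin 2) ℂ |
        ∃ x γ s : ℂ, γ ≠ 0 ∧ (g : Matrix (Fin 2) (Fin 2) ℂ) = pplus x * kmat γ * nmat s}
      = {g : Matrix.SpecialLinearGroup (Fin 2) ℂ |
          (g : Matrix (Fin 2) (Fin 2) ℂ) 1 0 + (g : Matrix (Fin 2) (Fin 2) ℂ) 1 1 ≠ 0}) ∧
    Dense {g : Matrix.SpecialLinearGroup (Fin 2) ℂ |
        (g : Matrix (Fin 2) (Fin 2) ℂ) 1 0 + (g : Matrix (Fin 2) (Fin 2) ℂ) 1 1 ≠ 0} := by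
  refine ⟨Set.ext fun g => ⟨?_, fun hcd => ?_⟩, dense_setOf_one_zero_add_one_one_ne_zero⟩
  · rintro ⟨x, γ, s, hγ, hg⟩
    rw [Set.mem_ofPred_eq, hg, pplus_mul_kmat_mul_nmat_one_zero_add_one_one]
    exact inv_ne_zero hγ
  · have hdet := g.det_coe
    rw [det_fin_two] at hdet
    exact ⟨_, _, _, inv_ne_zero hcd, (eta_fin_two _).trans (eq_pplus_mul_kmat_mul_nmat hdet hcd)⟩
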